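/- arXiv:2308.16359 — 2 statements merged into one kernel-verified Lean document; each statement's English description precedes it below -/
import Mathlib

section
/- Let X ⊆ Aut(T) be finite and N-reduced, and let g = a₁a₂⋯aₙ be a reduced word in X; write gᵢ = a₁⋯aᵢ. Then: (1) if n ≥ 2, the paths [v0, g_{n−2}·v0] and [g_{n−1}·v0, g·v0] are disjoint; (2) if n ≥ 2, [v0, g_{n−1}·v0] ∩ [g_{n−1}·v0, g·v0] = [g_{n−2}·v0, g_{n−1}·v0] ∩ [g_{n−1}·v0, g·v0], and in particular δ(g_{n−1}⁻¹, aₙ) = δ(a_{n−1}⁻¹, aₙ); (3) |g| = Σ_{i=1}^{n} |aᵢ| − 2 Σ_{i=1}^{n−1} δ(aᵢ⁻¹, a_{i+1}). -/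
noncomputable section

open Pointwise

namespace TreePaper

variable {V : Type*}

section Defs

variable (T : SimpleGraph V) (v0 : V)

/-- The vertex set of the geodesic segment `[u, w]` in the tree `T`. -/
def seg (u w : V) : Set V := {x | T.dist u x + T.dist x w = T.dist u w}

/-- `|g| = d(v0, g·v0)`. -/
def nrm (g : T ≃g T) : ℕ := T.dist v0 (g v0)

/-- `δ(g, h) = (|g| + |h| - |g⁻¹h|)/2`, as a rational number. -/
noncomputable def dlt (g h : T ≃g T) : ℚ :=
  ((nrm T v0 g : ℚ) + (nrm T v0 h : ℚ) - (nrm T v0 (g⁻¹ * h) : ℚ)) / 2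

/-- An automorphism is elliptic if it fixes a vertex or inverts an edge. -/
def IsElliptic (g : T ≃g T) : Prop :=
  (∃ v : V, g v = v) ∨ (∃ u w : V, T.Adj u w ∧ g u = w ∧ g w = u)

/-- Hyperbolic = not elliptic. -/
def IsHyperbolic (g : T ≃g T) : Prop := ¬ IsElliptic T g

/-- Translation length: the minimum of `d(v, g·v)` over all vertices `v`. -/
noncomputable def tl (g : T ≃g T) : ℕ := sInf (Set.range fun v : V => T.dist v (g v))

/-- The (vertex set of the) axis of `g`: vertices moved exactly the translation length. -/
def axisSet (g : T ≃g T) : Set V := {v : V | T.dist v (g v) = tl T g}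

/-- A subgroup is purely hyperbolic if every nontrivial element is hyperbolic. -/
def PurelyHyperbolic (G : Subgroup (T ≃g T)) : Prop :=
  ∀ g ∈ G, g ≠ 1 → IsHyperbolic T g

/-- `X^± = X ∪ X⁻¹`. -/
def Xpm (X : Set (T ≃g T)) : Set (T ≃g T) := X ∪ X⁻¹

/-- Condition N1: `X ∩ X⁻¹ = ∅`. -/
def N1 (X : Set (T ≃g T)) : Prop := X ∩ X⁻¹ = ∅

/-- Condition N2: `|xy| ≥ max (|x|, |y|)` for `x, y ∈ X^±` with `x ≠ y⁻¹`. -/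
def N2 (X : Set (T ≃g T)) : Prop :=
  ∀ x ∈ Xpm T X, ∀ y ∈ Xpm T X, x ≠ y⁻¹ →
    max (nrm T v0 x) (nrm T v0 y) ≤ nrm T v0 (x * y)

/-- Condition N3: `|xyz| > |x| + |z| - |y|` for suitable `x, y, z ∈ X^±`. -/
def N3 (X : Set (T ≃g T)) : Prop :=
  ∀ x ∈ Xpm T X, ∀ y ∈ Xpm T X, ∀ z ∈ Xpm T X, x ≠ y⁻¹ → y ≠ z⁻¹ →
    (nrm T v0 x : ℤ) + (nrm T v0 z : ℤ) - (nrm T v0 y : ℤ) < (nrm T v0 (x * y * z) : ℤ)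

/-- Condition N2′: `2δ(x⁻¹, y) ≤ min (|x|, |y|)`. -/
noncomputable def N2' (X : Set (T ≃g T)) : Prop :=
  ∀ x ∈ Xpm T X, ∀ y ∈ Xpm T X, x ≠ y⁻¹ →
    2 * dlt T v0 x⁻¹ y ≤ min (nrm T v0 x : ℚ) (nrm T v0 y : ℚ)

/-- Condition N3′: `δ(x⁻¹, y) + δ(y⁻¹, z) < |y|`. -/
noncomputable def N3' (X : Set (T ≃g T)) : Prop :=
  ∀ x ∈ Xpm T X, ∀ y ∈ Xpm T X, ∀ z ∈ Xpm T X, x ≠ y⁻¹ → y ≠ z⁻¹ →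
    dlt T v0 x⁻¹ y + dlt T v0 y⁻¹ z < (nrm T v0 y : ℚ)

/-- `X` is N-reduced: no nontrivial elliptic elements, and N1, N2, N3 hold. -/
def NReduced (X : Set (T ≃g T)) : Prop :=
  (∀ x ∈ X, x ≠ 1 → ¬ IsElliptic T x) ∧ N1 T X ∧ N2 T v0 X ∧ N3 T v0 X

/-- `H(g)`: the vertex set of the initial segment of `[v0, g·v0]` of length `⌊|g|/2⌋`. -/
def halfSet (g : T ≃g T) : Set V :=
  {x : V | x ∈ seg T v0 (g v0) ∧ T.dist v0 x ≤ nrm T v0 g / 2}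

/-- The endpoint of `H(g)`: the vertex on `[v0, g·v0]` at distance `⌊|g|/2⌋` from `v0`.
(Since paths in a tree starting at `v0` are uniquely determined by their endpoints, we
identify the path `H(g)` with this vertex.) -/
noncomputable def halfVertex (g : T ≃g T) : V :=
  letI := Classical.dec (∃ m, m ∈ seg T v0 (g v0) ∧ T.dist v0 m = nrm T v0 g / 2)
  if h : ∃ m, m ∈ seg T v0 (g v0) ∧ T.dist v0 m = nrm T v0 g / 2 then h.choose else v0

/-- `X` is a free basis of `⟨X⟩`: the homomorphism from the free group on `X` induced
by the inclusion is an isomorphism onto `⟨X⟩`. -/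
def IsFreeBasis (X : Set (T ≃g T)) : Prop :=
  Function.Injective (FreeGroup.lift (fun x : X => (x : T ≃g T))) ∧
  MonoidHom.range (FreeGroup.lift (fun x : X => (x : T ≃g T))) = Subgroup.closure X

/-- A subgroup of `Aut T` is discrete iff some finite set of vertices has trivial
pointwise stabilizer. -/
def IsDiscrete (G : Subgroup (T ≃g T)) : Prop :=
  ∃ F : Finset V, ∀ g ∈ G, (∀ v ∈ F, g v = v) → g = 1

end Defs

section Order

variable (T : SimpleGraph V) (v0 : V)

/-- The assumed properties of the chosen well-ordering of paths starting at `v0`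
(paths from `v0` are identified with their endpoints): it is a well-order, shorter
paths precede longer paths, and it is lexicographic. -/
structure IsPathOrder (lt : V → V → Prop) : Prop where
  wellOrder : IsWellOrder V lt
  short : ∀ u w : V, T.dist v0 u < T.dist v0 w → lt u w
  lex : ∀ u w : V, T.dist v0 u = T.dist v0 w → ∀ u' w' : V,
    u' ∈ seg T v0 u → w' ∈ seg T v0 w → T.dist v0 u' = T.dist v0 w' → lt u' w' → lt u w

/-- The ordering `≺` on two-element sets of paths (identified with their endpoints):
`A ≺ B` iff `A ≠ B` and the least element of the symmetric difference lies in `A`. -/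
def pairLt (lt : V → V → Prop) (A B : Set V) : Prop :=
  A ≠ B ∧ ∃ m ∈ (A \ B) ∪ (B \ A), m ∈ A ∧ ∀ x ∈ (A \ B) ∪ (B \ A), x ≠ m → lt m x

/-- `g ≺ h` iff `|g| = |h|` and `{H(g), H(g⁻¹)} ≺ {H(h), H(h⁻¹)}`. -/
noncomputable def autPrec (lt : V → V → Prop) (g h : T ≃g T) : Prop :=
  nrm T v0 g = nrm T v0 h ∧
    pairLt lt {halfVertex T v0 g, halfVertex T v0 g⁻¹}
      {halfVertex T v0 h, halfVertex T v0 h⁻¹}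

/-- `g <* h` iff `|g| < |h|` or `g ≺ h`. -/
noncomputable def autLtStar (lt : V → V → Prop) (g h : T ≃g T) : Prop :=
  nrm T v0 g < nrm T v0 h ∨ autPrec T v0 lt g h

/-- Condition N4: `x <* xy` for all `x, y ∈ X^±` with `x ≠ y⁻¹`. -/
noncomputable def N4 (lt : V → V → Prop) (X : Set (T ≃g T)) : Prop :=
  ∀ x ∈ Xpm T X, ∀ y ∈ Xpm T X, x ≠ y⁻¹ → autLtStar T v0 lt x (x * y)

/-- `X` is strongly N-reduced (w.r.t. `v0` and `<*`): a free basis satisfying N1 and N4. -/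
noncomputable def StronglyNReduced (lt : V → V → Prop) (X : Set (T ≃g T)) : Prop :=
  IsFreeBasis T X ∧ N1 T X ∧ N4 T v0 lt X

end Order

section Words

variable (T : SimpleGraph V)

/-- The product `a₀ a₁ ⋯ a_{k-1}`. -/
def wordProd (a : ℕ → T ≃g T) (k : ℕ) : T ≃g T := ((List.range k).map a).prod

/-- The product `aᵢ a_{i+1} ⋯ a_j` (inclusive endpoints). -/
def segProd (a : ℕ → T ≃g T) (i j : ℕ) : T ≃g T := ((List.range' i (j + 1 - i)).map a).prod

/-- `a 0, …, a (n-1)` is a reduced word in `X`: each letter lies in `X^±` and no letter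
is followed by its inverse. -/
def IsReducedWord (X : Set (T ≃g T)) (a : ℕ → T ≃g T) (n : ℕ) : Prop :=
  (∀ i < n, a i ∈ Xpm T X) ∧ ∀ i, i + 1 < n → a (i + 1) ≠ (a i)⁻¹

end Words

section Geometry

variable (T : SimpleGraph V) (v0 : V)

/-- `p` is a nearest-point projection of `w` to the set `A`. -/
def NearestPt (A : Set V) (w p : V) : Prop :=
  p ∈ A ∧ ∀ z ∈ A, T.dist w p ≤ T.dist w z

/-- Distance between two sets of vertices. -/
noncomputable def setDist (A B : Set V) : ℕ :=
  sInf {n : ℕ | ∃ a ∈ A, ∃ b ∈ B, T.dist a b = n}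

/-- A vertex `p` of the axis of `g` lies in the half-open interval `U_g^0`
(of radius `l(g)/2` about the projection `c` of `v0`, closed at the `<`-smaller end):
either `d(c,p) < l(g)/2`, or `d(c,p) = l(g)/2` and `p` precedes the opposite boundary
vertex in the ordering. -/
def inU0 (lt : V → V → Prop) (g : T ≃g T) (c p : V) : Prop :=
  2 * T.dist c p < tl T g ∨
    (2 * T.dist c p = tl T g ∧
      ∀ p', p' ∈ axisSet T g → T.dist c p' = T.dist c p → p' ≠ p → lt p p')

/-- `X` admits a fundamental system: `X` has no nontrivial elliptic elements and for all
distinct `g, h ∈ X`, the projection of the axis of `h` to the axis of `g` is contained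
in `U_g^0`. -/
def AdmitsFundamentalSystem (lt : V → V → Prop) (X : Set (T ≃g T)) : Prop :=
  (∀ x ∈ X, x ≠ 1 → ¬ IsElliptic T x) ∧
  ∀ g ∈ X, ∀ h ∈ X, g ≠ h → ∀ c z p : V,
    NearestPt T (axisSet T g) v0 c → z ∈ axisSet T h →
    NearestPt T (axisSet T g) z p → inU0 T lt g c p

end Geometry


section Aux

variable {T : SimpleGraph V}


lemma mem_seg {u w x : V} : x ∈ seg T u w ↔ T.dist u x + T.dist x w = T.dist u w := Iff.rfl

lemma path_length (hT : T.IsTree) {u v : V} (p : T.Walk u v) (hp : p.IsPath) :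
    p.length = T.dist u v := by
  classical
  obtain ⟨q, hq, hql⟩ := hT.isConnected.exists_path_of_dist u v
  rw [(hT.existsUnique_path u v).unique hp hq, hql]

lemma mem_seg_of_path (hT : T.IsTree) {u v x : V} {p : T.Walk u v} (hp : p.IsPath)
    (hx : x ∈ p.support) : x ∈ seg T u v := by
  classical
  rw [mem_seg, ← path_length hT p hp, ← path_length hT _ (hp.takeUntil hx),
    ← path_length hT _ (hp.dropUntil hx)]
  rw [← SimpleGraph.Walk.length_append, SimpleGraph.Walk.take_spec]

lemma exists_path_through (hT : T.IsTree) {u v x : V} (hx : x ∈ seg T u v) :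
    ∃ p : T.Walk u v, p.IsPath ∧ x ∈ p.support := by
  obtain ⟨q, hq, hql⟩ := hT.isConnected.exists_path_of_dist u x
  obtain ⟨r, hr, hrl⟩ := hT.isConnected.exists_path_of_dist x v
  have hlen : (q.append r).length = T.dist u v := by
    rw [SimpleGraph.Walk.length_append, hql, hrl, hx]
  exact ⟨q.append r, (q.append r).isPath_of_length_eq_dist hlen,
    by rw [SimpleGraph.Walk.mem_support_append_iff]; exact Or.inl (q.end_mem_support)⟩

lemma seg_comm {u v x : V} : x ∈ seg T u v ↔ x ∈ seg T v u := by
  have h1 : T.dist u v = T.dist v u := SimpleGraph.dist_comm ..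
  have h2 : T.dist u x = T.dist x u := SimpleGraph.dist_comm ..
  have h3 : T.dist x v = T.dist v x := SimpleGraph.dist_comm ..
  rw [mem_seg, mem_seg]
  omega

/-- T3: if `x, y` lie on `[u,v]` with `d(u,x) ≤ d(u,y)` then `x ∈ [u,y]`. -/
lemma seg_between (hT : T.IsTree) {u v x y : V} (hx : x ∈ seg T u v) (hy : y ∈ seg T u v)
    (h : T.dist u x ≤ T.dist u y) : x ∈ seg T u y := by
  classical
  obtain ⟨p, hp, hxp⟩ := exists_path_through hT hx
  obtain ⟨p', hp', hyp⟩ := exists_path_through hT hy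
  rw [(hT.existsUnique_path u v).unique hp' hp] at hyp
  rw [← SimpleGraph.Walk.take_spec p hxp, SimpleGraph.Walk.mem_support_append_iff] at hyp
  have hx' := hx; have hy' := hy
  rw [mem_seg] at hx' hy' ⊢
  rcases hyp with hyp | hyp
  · have h1 : y ∈ seg T u x := mem_seg_of_path hT (hp.takeUntil hxp) hyp
    rw [mem_seg] at h1
    have h2 : T.dist x y = T.dist y x := SimpleGraph.dist_comm ..
    omega
  · have h1 : y ∈ seg T x v := mem_seg_of_path hT (hp.dropUntil hxp) hyp
    rw [mem_seg] at h1
    omega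

lemma isPath_append {u v w : V} {p : T.Walk u v} {q : T.Walk v w} (hp : p.IsPath)
    (hq : q.IsPath) (h : ∀ z, z ∈ p.support → z ∈ q.support → z = v) :
    (p.append q).IsPath := by
  rw [SimpleGraph.Walk.isPath_def, SimpleGraph.Walk.support_append]
  refine hp.support_nodup.append (hq.support_nodup.sublist (List.tail_sublist _)) ?_
  intro z hz hz'
  have hzq : z ∈ q.support := List.mem_of_mem_tail hz'
  have hzv := h z hz hzq
  subst hzv
  have := hq.support_nodup
  rw [q.support_eq_cons] at this
  exact (List.nodup_cons.mp this).1 hz'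

lemma exists_median (hT : T.IsTree) (A B C : V) :
    ∃ m, m ∈ seg T A B ∧ m ∈ seg T A C ∧ m ∈ seg T B C := by
  classical
  obtain ⟨p, hp, hpl⟩ := hT.isConnected.exists_path_of_dist A B
  obtain ⟨q, hq, hql⟩ := hT.isConnected.exists_path_of_dist A C
  have hA : A ∈ p.support.toFinset ∩ q.support.toFinset := by
    simp [SimpleGraph.Walk.start_mem_support]
  obtain ⟨m, hmF, hmax⟩ := Finset.exists_max_image (p.support.toFinset ∩ q.support.toFinset)
    (fun z => T.dist A z) ⟨A, hA⟩
  simp only [Finset.mem_inter, List.mem_toFinset] at hmF hmax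
  obtain ⟨hm1, hm2⟩ := hmF
  have hsAB : m ∈ seg T A B := mem_seg_of_path hT hp hm1
  have hsAC : m ∈ seg T A C := mem_seg_of_path hT hq hm2
  refine ⟨m, hsAB, hsAC, ?_⟩
  have hdis : ∀ z, z ∈ (p.dropUntil m hm1).reverse.support →
      z ∈ (q.dropUntil m hm2).support → z = m := by
    intro z hz1 hz2
    rw [SimpleGraph.Walk.support_reverse, List.mem_reverse] at hz1
    have hz1' : z ∈ p.support := SimpleGraph.Walk.support_dropUntil_subset _ _ hz1
    have hz2' : z ∈ q.support := SimpleGraph.Walk.support_dropUntil_subset _ _ hz2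
    have hle := hmax z ⟨hz1', hz2'⟩
    have hzmB : z ∈ seg T m B := mem_seg_of_path hT (hp.dropUntil hm1) hz1
    have hzAB : z ∈ seg T A B := mem_seg_of_path hT hp hz1'
    rw [mem_seg] at hzmB hzAB hsAB
    have h0 : T.dist m z = 0 := by omega
    exact ((hT.isConnected.dist_eq_zero_iff (u := m) (v := z)).mp h0).symm
  have hpath := isPath_append (hp.dropUntil hm1).reverse (hq.dropUntil hm2) hdis
  have hlen := path_length hT _ hpath
  rw [SimpleGraph.Walk.length_append, SimpleGraph.Walk.length_reverse,
    path_length hT _ (hp.dropUntil hm1), path_length hT _ (hq.dropUntil hm2)] at hlen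
  have hBm : T.dist B m = T.dist m B := SimpleGraph.dist_comm ..
  rw [mem_seg]
  omega


lemma median_dist {A B C m : V} (h1 : m ∈ seg T A B) (h2 : m ∈ seg T A C)
    (h3 : m ∈ seg T B C) :
    2 * T.dist A m + T.dist B C = T.dist A B + T.dist A C := by
  rw [mem_seg] at h1 h2 h3
  have c1 : T.dist m B = T.dist B m := SimpleGraph.dist_comm ..
  omega

/-- Projection: if `m` is the median of `E, B, C` and `x ∈ [B,C]`, then
`d(E,x) = d(E,m) + d(m,x)`. -/
lemma dist_to_seg (hT : T.IsTree) {E B C m x : V} (h1 : m ∈ seg T E B)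
    (h2 : m ∈ seg T E C) (h3 : m ∈ seg T B C) (hx : x ∈ seg T B C) :
    T.dist E x = T.dist E m + T.dist m x := by
  have t1 : T.dist E x ≤ T.dist E m + T.dist m x := hT.isConnected.dist_triangle
  rcases le_total (T.dist B x) (T.dist B m) with hc | hc
  · have hxm : x ∈ seg T B m := seg_between hT hx h3 hc
    have t2 : T.dist E B ≤ T.dist E x + T.dist x B := hT.isConnected.dist_triangle
    rw [mem_seg] at hxm h1
    have c1 : T.dist m B = T.dist B m := SimpleGraph.dist_comm ..
    have c2 : T.dist x m = T.dist m x := SimpleGraph.dist_comm ..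
    have c3 : T.dist x B = T.dist B x := SimpleGraph.dist_comm ..
    omega
  · have hcc : T.dist C x ≤ T.dist C m := by
      have k1 := mem_seg.mp hx
      have k2 := mem_seg.mp h3
      have c1 : T.dist x C = T.dist C x := SimpleGraph.dist_comm ..
      have c2 : T.dist m C = T.dist C m := SimpleGraph.dist_comm ..
      omega
    have hxm : x ∈ seg T C m := seg_between hT (seg_comm.mp hx) (seg_comm.mp h3) hcc
    have t2 : T.dist E C ≤ T.dist E x + T.dist x C := hT.isConnected.dist_triangle
    rw [mem_seg] at hxm h2
    have c1 : T.dist m C = T.dist C m := SimpleGraph.dist_comm ..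
    have c2 : T.dist x m = T.dist m x := SimpleGraph.dist_comm ..
    have c3 : T.dist x C = T.dist C x := SimpleGraph.dist_comm ..
    omega

lemma seg_inter_eq (hT : T.IsTree) {A B C m : V} (h1 : m ∈ seg T A B)
    (h2 : m ∈ seg T A C) (h3 : m ∈ seg T B C) :
    seg T A B ∩ seg T B C = seg T m B := by
  ext x
  constructor
  · rintro ⟨hxAB, hxBC⟩
    have hle : T.dist B x ≤ T.dist B m := by
      have k1 := mem_seg.mp hxAB
      have k2 := mem_seg.mp hxBC
      have k3 := mem_seg.mp h1
      have k4 := mem_seg.mp h3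
      have t : T.dist A C ≤ T.dist A x + T.dist x C := hT.isConnected.dist_triangle
      have q := median_dist h1 h2 h3
      have c1 : T.dist x B = T.dist B x := SimpleGraph.dist_comm ..
      have c2 : T.dist m B = T.dist B m := SimpleGraph.dist_comm ..
      have c3 : T.dist A m = T.dist m A := SimpleGraph.dist_comm ..
      omega
    have := seg_between hT (seg_comm.mp hxAB) (seg_comm.mp h1) hle
    exact seg_comm.mp this
  · intro hx
    have k0 := mem_seg.mp hx
    have k1 := mem_seg.mp h1
    have k3 := mem_seg.mp h3
    have t1 : T.dist A x ≤ T.dist A m + T.dist m x := hT.isConnected.dist_triangle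
    have t2 : T.dist A B ≤ T.dist A x + T.dist x B := hT.isConnected.dist_triangle
    have t3 : T.dist x C ≤ T.dist x m + T.dist m C := hT.isConnected.dist_triangle
    have t4 : T.dist B C ≤ T.dist B x + T.dist x C := hT.isConnected.dist_triangle
    have c1 : T.dist x m = T.dist m x := SimpleGraph.dist_comm ..
    have c2 : T.dist x B = T.dist B x := SimpleGraph.dist_comm ..
    have c3 : T.dist m B = T.dist B m := SimpleGraph.dist_comm ..
    constructor
    · rw [mem_seg]; omega
    · rw [mem_seg]; omega

lemma n3geom (hT : T.IsTree) {A B C D m m' : V}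
    (hm1 : m ∈ seg T A B) (hm3 : m ∈ seg T B C)
    (hn1 : m' ∈ seg T B C) (hn3 : m' ∈ seg T C D)
    (hN3 : (T.dist A B : ℤ) + T.dist C D - T.dist B C < T.dist A D) :
    T.dist B m + T.dist C m' < T.dist B C := by
  by_contra hcon
  push_neg at hcon
  have k1 := mem_seg.mp hn1
  have k3 := mem_seg.mp hm3
  have c1 : T.dist m' C = T.dist C m' := SimpleGraph.dist_comm ..
  have hle : T.dist B m' ≤ T.dist B m := by omega
  have h5 : m' ∈ seg T B m := seg_between hT hn1 hm3 hle
  have l5 := mem_seg.mp h5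
  have l1 := mem_seg.mp hm1
  have l3 := mem_seg.mp hn3
  have t1 : T.dist A D ≤ T.dist A m + T.dist m D := hT.isConnected.dist_triangle
  have t2 : T.dist m D ≤ T.dist m m' + T.dist m' D := hT.isConnected.dist_triangle
  have c2 : T.dist m B = T.dist B m := SimpleGraph.dist_comm ..
  have c3 : T.dist m' m = T.dist m m' := SimpleGraph.dist_comm ..
  omega

lemma key (hT : T.IsTree) {A B C D m m' : V}
    (hm1 : m ∈ seg T A B) (hm2 : m ∈ seg T A C) (hm3 : m ∈ seg T B C)
    (hn1 : m' ∈ seg T B C) (hn2 : m' ∈ seg T B D) (hn3 : m' ∈ seg T C D)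
    (h : T.dist B m + T.dist C m' < T.dist B C) :
    T.dist A D + 2 * T.dist B m + 2 * T.dist C m' =
      T.dist A B + T.dist B C + T.dist C D := by
  have k_n1 := mem_seg.mp hn1
  have k_m3 := mem_seg.mp hm3
  have c_mC : T.dist m C = T.dist C m := SimpleGraph.dist_comm ..
  have c_m'C : T.dist m' C = T.dist C m' := SimpleGraph.dist_comm ..
  have hle1 : T.dist B m ≤ T.dist B m' := by omega
  have h2 : m ∈ seg T B m' := seg_between hT hm3 hn1 hle1
  have k_h2 := mem_seg.mp h2
  have hle2 : T.dist C m' ≤ T.dist C m := by omega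
  have h3' : m' ∈ seg T C m := seg_between hT (seg_comm.mp hn1) (seg_comm.mp hm3) hle2
  have k_h3' := mem_seg.mp h3'
  have c_mm' : T.dist m' m = T.dist m m' := SimpleGraph.dist_comm ..
  have h6 : m ∈ seg T A m' := by
    rw [mem_seg]
    have l1 := mem_seg.mp hm2
    have t1 : T.dist A m' ≤ T.dist A m + T.dist m m' := hT.isConnected.dist_triangle
    have t2 : T.dist A C ≤ T.dist A m' + T.dist m' C := hT.isConnected.dist_triangle
    omega
  have k_h6 := mem_seg.mp h6
  have h7 : m' ∈ seg T m D := by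
    rw [mem_seg]
    have l2 := mem_seg.mp hn2
    have t1 : T.dist m D ≤ T.dist m m' + T.dist m' D := hT.isConnected.dist_triangle
    have t2 : T.dist B D ≤ T.dist B m + T.dist m D := hT.isConnected.dist_triangle
    omega
  have k_h7 := mem_seg.mp h7
  obtain ⟨m3, hk1, hk2, hk3⟩ := exists_median hT A m' D
  have k_k1 := mem_seg.mp hk1
  have k_k3 := mem_seg.mp hk3
  have k_n2 := mem_seg.mp hn2
  have k_n3 := mem_seg.mp hn3
  have hposmm' : 0 < T.dist m m' := by omega
  have hzero : T.dist m' m3 = 0 := by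
    rcases le_or_gt (T.dist m' m3) (T.dist m m') with hle | hlt
    · have hms : m3 ∈ seg T m' m := by
        refine seg_between hT (seg_comm.mp hk1) (seg_comm.mp h6) ?_
        omega
      have k_ms := mem_seg.mp hms
      have hBC : m3 ∈ seg T B C := by
        rw [mem_seg]
        have t1 : T.dist B m3 ≤ T.dist B m + T.dist m m3 := hT.isConnected.dist_triangle
        have t2 : T.dist m3 C ≤ T.dist m3 m' + T.dist m' C := hT.isConnected.dist_triangle
        have t3 : T.dist B C ≤ T.dist B m3 + T.dist m3 C := hT.isConnected.dist_triangle
        have c1 : T.dist m m3 = T.dist m3 m := SimpleGraph.dist_comm ..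
        have c2 : T.dist m3 m' = T.dist m' m3 := SimpleGraph.dist_comm ..
        omega
      have k_BC := mem_seg.mp hBC
      have hCm3 : T.dist C m3 = T.dist C m' + T.dist m' m3 := by
        have t1 : T.dist B m3 ≤ T.dist B m + T.dist m m3 := hT.isConnected.dist_triangle
        have t2 : T.dist m3 C ≤ T.dist m3 m' + T.dist m' C := hT.isConnected.dist_triangle
        have c1 : T.dist m m3 = T.dist m3 m := SimpleGraph.dist_comm ..
        have c2 : T.dist m3 m' = T.dist m' m3 := SimpleGraph.dist_comm ..
        have c3 : T.dist m3 C = T.dist C m3 := SimpleGraph.dist_comm ..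
        omega
      have hBD : m3 ∈ seg T B D := by
        rw [mem_seg]
        have t1 : T.dist B m3 ≤ T.dist B m' + T.dist m' m3 := hT.isConnected.dist_triangle
        have t2 : T.dist B D ≤ T.dist B m3 + T.dist m3 D := hT.isConnected.dist_triangle
        omega
      have hCD : m3 ∈ seg T C D := by
        rw [mem_seg]
        omega
      have q1 := median_dist (seg_comm.mp hBC) hCD hBD
      have q2 := median_dist (seg_comm.mp hn1) hn3 hn2
      omega
    · have hms : m ∈ seg T m' m3 := by
        refine seg_between hT (seg_comm.mp h6) (seg_comm.mp hk1) ?_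
        omega
      have k_ms := mem_seg.mp hms
      have hmD : m ∈ seg T m' D := by
        rw [mem_seg]
        have t1 : T.dist m D ≤ T.dist m m3 + T.dist m3 D := hT.isConnected.dist_triangle
        have t2 : T.dist m' D ≤ T.dist m' m + T.dist m D := hT.isConnected.dist_triangle
        omega
      have k_mD := mem_seg.mp hmD
      have t : T.dist B D ≤ T.dist B m + T.dist m D := hT.isConnected.dist_triangle
      omega
  have hm3m' : m' = m3 := (hT.isConnected.dist_eq_zero_iff).mp hzero
  subst hm3m'
  have k_k2 := mem_seg.mp hk2
  have k_m1 := mem_seg.mp hm1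
  have c_mB : T.dist m B = T.dist B m := SimpleGraph.dist_comm ..
  omega



lemma dist_iso (hT : T.IsTree) (g : T ≃g T) (u v : V) :
    T.dist (g u) (g v) = T.dist u v := by
  have key : ∀ (h : T ≃g T) (x y : V), T.dist (h x) (h y) ≤ T.dist x y := by
    intro h x y
    obtain ⟨p, hpl⟩ := hT.isConnected.exists_walk_length_eq_dist x y
    have := SimpleGraph.dist_le (p.map h.toHom)
    rwa [SimpleGraph.Walk.length_map, hpl] at this
  refine le_antisymm (key g u v) ?_
  have := key g⁻¹ (g u) (g v)
  rwa [RelIso.inv_apply_self, RelIso.inv_apply_self] at this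

lemma nrm_inv (hT : T.IsTree) (v0 : V) (g : T ≃g T) :
    nrm T v0 g⁻¹ = nrm T v0 g := by
  unfold nrm
  have h1 : T.dist (g v0) (g (g⁻¹ v0)) = T.dist v0 (g⁻¹ v0) := dist_iso hT g v0 (g⁻¹ v0)
  rw [RelIso.apply_inv_self] at h1
  rw [← h1, SimpleGraph.dist_comm]

lemma dist_mul (hT : T.IsTree) (v0 : V) (g h : T ≃g T) :
    T.dist (g v0) (h v0) = nrm T v0 (g⁻¹ * h) := by
  unfold nrm
  have h1 := dist_iso hT g⁻¹ (g v0) (h v0)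
  rw [RelIso.inv_apply_self] at h1
  rw [← h1, RelIso.mul_apply]

lemma wordProd_succ (T : SimpleGraph V) (a : ℕ → T ≃g T) (k : ℕ) :
    wordProd T a (k + 1) = wordProd T a k * a k := by
  simp [wordProd, List.range_succ]

lemma wordProd_zero (T : SimpleGraph V) (a : ℕ → T ≃g T) : wordProd T a 0 = 1 := by
  simp [wordProd]

lemma one_le_nrm (hT : T.IsTree) (v0 : V) {X : Set (T ≃g T)} (hX : NReduced T v0 X)
    {b : T ≃g T} (hb : b ∈ Xpm T X) : 1 ≤ nrm T v0 b := by
  by_contra hcon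
  have h0 : nrm T v0 b = 0 := by omega
  have hfix : b v0 = v0 := ((hT.isConnected.dist_eq_zero_iff).mp h0).symm
  have hone : (1 : T ≃g T) ∉ X := by
    intro h1
    have : (1 : T ≃g T) ∈ X ∩ X⁻¹ := ⟨h1, by rw [Set.mem_inv, inv_one]; exact h1⟩
    rw [hX.2.1] at this
    exact this
  rcases hb with hb | hb
  · have hbne : b ≠ 1 := by rintro rfl; exact hone hb
    exact hX.1 b hb hbne (Or.inl ⟨v0, hfix⟩)
  · rw [Set.mem_inv] at hb
    have hbne : b⁻¹ ≠ 1 := by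
      intro h1
      rw [h1] at hb
      exact hone hb
    refine hX.1 b⁻¹ hb hbne (Or.inl ⟨v0, ?_⟩)
    rw [← hfix, RelIso.inv_apply_self, hfix]

end Aux

/-- local-to-global cancellation for words in an N-reduced set. -/
theorem statement_5 {V : Type*} (T : SimpleGraph V) (hT : T.IsTree) (v0 : V)
    (X : Set (T ≃g T)) (hXfin : X.Finite) (hX : NReduced T v0 X)
    (n : ℕ) (hn : 1 ≤ n) (a : ℕ → T ≃g T) (ha : IsReducedWord T X a n) :
    (2 ≤ n → seg T v0 (wordProd T a (n - 2) v0) ∩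
        seg T (wordProd T a (n - 1) v0) (wordProd T a n v0) = ∅) ∧
    (2 ≤ n →
      seg T v0 (wordProd T a (n - 1) v0) ∩
          seg T (wordProd T a (n - 1) v0) (wordProd T a n v0)
        = seg T (wordProd T a (n - 2) v0) (wordProd T a (n - 1) v0) ∩
            seg T (wordProd T a (n - 1) v0) (wordProd T a n v0) ∧
      dlt T v0 (wordProd T a (n - 1))⁻¹ (a (n - 1))
        = dlt T v0 (a (n - 2))⁻¹ (a (n - 1))) ∧
    ((nrm T v0 (wordProd T a n) : ℚ)
      = (∑ i ∈ Finset.range n, (nrm T v0 (a i) : ℚ))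
        - 2 * ∑ i ∈ Finset.range (n - 1), dlt T v0 (a i)⁻¹ (a (i + 1))) := by
  classical
  obtain ⟨hmem, hred⟩ := ha
  have hN2 := hX.2.2.1
  have hN3 := hX.2.2.2
  set P : ℕ → V := fun k => wordProd T a k v0 with hPdef
  have hP0 : P 0 = v0 := by
    show wordProd T a 0 v0 = v0
    rw [wordProd_zero]; rfl
  have d0 : ∀ k, T.dist (P 0) (P k) = nrm T v0 (wordProd T a k) := by
    intro k; rw [hP0]; rfl
  have d1 : ∀ k, T.dist (P k) (P (k + 1)) = nrm T v0 (a k) := by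
    intro k
    have h1 : P (k + 1) = wordProd T a k (a k v0) := by
      show wordProd T a (k + 1) v0 = _
      rw [wordProd_succ, RelIso.mul_apply]
    rw [h1]
    exact dist_iso hT (wordProd T a k) v0 (a k v0)
  have d2 : ∀ k, T.dist (P k) (P (k + 2)) = nrm T v0 (a k * a (k + 1)) := by
    intro k
    have h1 : P (k + 2) = wordProd T a k ((a k * a (k + 1)) v0) := by
      show wordProd T a (k + 1 + 1) v0 = _
      rw [wordProd_succ, wordProd_succ, mul_assoc, RelIso.mul_apply]
    rw [h1]
    exact dist_iso hT (wordProd T a k) v0 ((a k * a (k + 1)) v0)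
  have d3 : ∀ k, T.dist (P k) (P (k + 3)) = nrm T v0 (a k * a (k + 1) * a (k + 2)) := by
    intro k
    have h1 : P (k + 3) = wordProd T a k ((a k * a (k + 1) * a (k + 2)) v0) := by
      show wordProd T a (k + 1 + 1 + 1) v0 = _
      rw [wordProd_succ, wordProd_succ, wordProd_succ]
      simp [mul_assoc, RelIso.mul_apply]
    rw [h1]
    exact dist_iso hT (wordProd T a k) v0 ((a k * a (k + 1) * a (k + 2)) v0)
  have hne : ∀ i, i + 1 < n → a i ≠ (a (i + 1))⁻¹ := by
    intro i h hcontra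
    exact hred i h (by rw [hcontra, inv_inv])
  set e : ℕ → ℤ := fun i =>
    (nrm T v0 (a i) : ℤ) + (nrm T v0 (a (i + 1)) : ℤ) - (nrm T v0 (a i * a (i + 1)) : ℤ)
    with hedef
  -- two-step median value
  have med2 : ∀ k, k + 2 ≤ n → ∀ m₂ : V, m₂ ∈ seg T (P k) (P (k + 1)) →
      m₂ ∈ seg T (P k) (P (k + 2)) → m₂ ∈ seg T (P (k + 1)) (P (k + 2)) →
      2 * (T.dist (P (k + 1)) m₂ : ℤ) = e k := by
    intro k hk m₂ hm1 hm2 hm3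
    have q := median_dist (seg_comm.mp hm1) hm3 hm2
    have c1 : T.dist (P (k + 1)) (P k) = T.dist (P k) (P (k + 1)) := SimpleGraph.dist_comm ..
    rw [c1, d1 k, d1 (k + 1), d2 k] at q
    simp only [hedef]
    omega
  -- strict three-term inequality (letter level)
  have n3l : ∀ k, k + 3 ≤ n → ∀ μ m' : V,
      μ ∈ seg T (P k) (P (k + 1)) → μ ∈ seg T (P (k + 1)) (P (k + 2)) →
      m' ∈ seg T (P (k + 1)) (P (k + 2)) → m' ∈ seg T (P (k + 2)) (P (k + 3)) →
      T.dist (P (k + 1)) μ + T.dist (P (k + 2)) m' < T.dist (P (k + 1)) (P (k + 2)) := by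
    intro k hk μ m' h1 h2 h3 h4
    refine n3geom hT h1 h2 h3 h4 ?_
    rw [d1 k, d1 (k + 1), d1 (k + 2), d3 k]
    exact hN3 (a k) (hmem k (by omega)) (a (k + 1)) (hmem (k + 1) (by omega))
      (a (k + 2)) (hmem (k + 2) (by omega)) (hne k (by omega)) (hne (k + 1) (by omega))
  have core : ∀ k, 1 ≤ k → k ≤ n →
      ((T.dist (P 0) (P k) : ℤ) =
        (∑ i ∈ Finset.range k, (nrm T v0 (a i) : ℤ)) - ∑ i ∈ Finset.range (k - 1), e i)
      ∧ (2 ≤ k → (T.dist (P 0) (P (k - 1)) : ℤ) + (nrm T v0 (a (k - 1)) : ℤ)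
          - (T.dist (P 0) (P k) : ℤ) = e (k - 2)) := by
    intro k
    induction k with
    | zero => omega
    | succ k IH =>
      intro _ hkn
      rcases Nat.lt_or_ge k 2 with hk2 | hk2
      · interval_cases k
        · refine ⟨?_, by omega⟩
          have h1 := d1 0
          simp only [show (0 : ℕ) + 1 = 1 from rfl] at h1
          rw [h1]
          simp
        · have h2 := d2 0
          have h1 := d1 0
          simp only [show (0 : ℕ) + 1 = 1 from rfl, show (0 : ℕ) + 2 = 2 from rfl] at h1 h2
          constructor
          · rw [h2]
            simp only [hedef, show (2 : ℕ) - 1 = 1 from rfl, Finset.sum_range_succ,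
              Finset.range_zero, Finset.sum_empty, Finset.range_one, Finset.sum_singleton]
            push_cast
            ring
          · intro _
            simp only [show (2 : ℕ) - 1 = 1 from rfl, show (2 : ℕ) - 2 = 0 from rfl]
            rw [h1, h2]
      · obtain ⟨j, rfl⟩ : ∃ j, k = j + 2 := ⟨k - 2, by omega⟩
        obtain ⟨hA, hB⟩ := IH (by omega) (by omega)
        have hB := hB (by omega)
        simp only [show j + 2 - 1 = j + 1 from rfl, show j + 2 - 2 = j from rfl] at hA hB
        obtain ⟨m, hm1, hm2, hm3⟩ := exists_median hT (P 0) (P (j + 1)) (P (j + 2))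
        obtain ⟨l, hl1, hl2, hl3⟩ := exists_median hT (P j) (P (j + 1)) (P (j + 2))
        obtain ⟨m', hq1, hq2, hq3⟩ := exists_median hT (P (j + 1)) (P (j + 2)) (P (j + 3))
        have hvm : 2 * (T.dist (P (j + 1)) m : ℤ) = e j := by
          have q := median_dist (seg_comm.mp hm1) hm3 hm2
          have c1 : T.dist (P (j + 1)) (P 0) = T.dist (P 0) (P (j + 1)) :=
            SimpleGraph.dist_comm ..
          have hd := d1 (j + 1)
          simp only [show j + 1 + 1 = j + 2 from rfl] at hd
          rw [c1, hd] at q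
          omega
        have hvl : 2 * (T.dist (P (j + 1)) l : ℤ) = e j := med2 j (by omega) l hl1 hl2 hl3
        have hvm' : 2 * (T.dist (P (j + 2)) m' : ℤ) = e (j + 1) :=
          med2 (j + 1) (by omega) m' hq1 hq2 hq3
        have hlt : T.dist (P (j + 1)) l + T.dist (P (j + 2)) m' <
            T.dist (P (j + 1)) (P (j + 2)) := n3l j (by omega) l m' hl1 hl3 hq1 hq3
        have hlt' : T.dist (P (j + 1)) m + T.dist (P (j + 2)) m' <
            T.dist (P (j + 1)) (P (j + 2)) := by omega
        have hkey := key hT hm1 hm2 hm3 hq1 hq2 hq3 hlt'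
        have hd1 := d1 (j + 1)
        have hd1' := d1 (j + 2)
        simp only [show j + 1 + 1 = j + 2 from rfl, show j + 2 + 1 = j + 3 from rfl]
          at hd1 hd1'
        have hsum1 : (∑ i ∈ Finset.range (j + 3), (nrm T v0 (a i) : ℤ)) =
            (∑ i ∈ Finset.range (j + 2), (nrm T v0 (a i) : ℤ)) + nrm T v0 (a (j + 2)) :=
          Finset.sum_range_succ _ _
        have hsum2 : (∑ i ∈ Finset.range (j + 2), e i) =
            (∑ i ∈ Finset.range (j + 1), e i) + e (j + 1) := Finset.sum_range_succ _ _
        constructor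
        · simp only [show j + 2 + 1 = j + 3 from rfl, show j + 3 - 1 = j + 2 from rfl]
          omega
        · intro _
          simp only [show j + 2 + 1 = j + 3 from rfl, show j + 3 - 1 = j + 2 from rfl,
            show j + 3 - 2 = j + 1 from rfl]
          omega
  have hw : ∀ k, wordProd T a k v0 = P k := fun k => rfl
  have hdlt : ∀ i, dlt T v0 (a i)⁻¹ (a (i + 1)) = (e i : ℚ) / 2 := by
    intro i
    unfold dlt
    rw [inv_inv, nrm_inv hT]
    simp only [hedef]
    push_cast
    ring
  refine ⟨?_, ?_, ?_⟩
  · -- Part 1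
    intro h2n
    obtain ⟨i, rfl⟩ : ∃ i, n = i + 2 := ⟨n - 2, by omega⟩
    obtain ⟨m, hm1, hm2, hm3⟩ := exists_median hT (P 0) (P (i + 1)) (P (i + 2))
    obtain ⟨m₂, h21, h22, h23⟩ := exists_median hT (P i) (P (i + 1)) (P (i + 2))
    have hBcore := (core (i + 2) (by omega) le_rfl).2 (by omega)
    simp only [show i + 2 - 1 = i + 1 from rfl, show i + 2 - 2 = i from rfl] at hBcore
    have hd := d1 (i + 1)
    simp only [show i + 1 + 1 = i + 2 from rfl] at hd
    have hvm : 2 * (T.dist (P (i + 1)) m : ℤ) = e i := by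
      have q := median_dist (seg_comm.mp hm1) hm3 hm2
      have c1 : T.dist (P (i + 1)) (P 0) = T.dist (P 0) (P (i + 1)) :=
        SimpleGraph.dist_comm ..
      rw [c1, hd] at q
      omega
    have hvm2 : 2 * (T.dist (P (i + 1)) m₂ : ℤ) = e i := med2 i (by omega) m₂ h21 h22 h23
    have hmeq : m = m₂ := by
      have hbet : m ∈ seg T (P (i + 1)) m₂ := seg_between hT hm3 h23 (by omega)
      have h0 : T.dist m m₂ = 0 := by have := mem_seg.mp hbet; omega
      exact (hT.isConnected.dist_eq_zero_iff).mp h0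
    subst hmeq
    have hclaim : (T.dist (P 0) (P i) : ℤ) + e i - nrm T v0 (a i) <
        T.dist (P 0) (P (i + 1)) := by
      rcases Nat.eq_zero_or_pos i with rfl | hipos
      · have hself : T.dist (P 0) (P 0) = 0 := SimpleGraph.dist_self ..
        have hd0' := d1 0
        simp only [show (0 : ℕ) + 1 = 1 from rfl] at hd0'
        have hmax := hN2 (a 0) (hmem 0 (by omega)) (a 1) (hmem 1 (by omega))
          (hne 0 (by omega))
        have hle : nrm T v0 (a 1) ≤ nrm T v0 (a 0 * a 1) :=
          le_trans (le_max_right _ _) hmax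
        have hone : 1 ≤ nrm T v0 (a 0) := one_le_nrm hT v0 hX (hmem 0 (by omega))
        simp only [hedef]
        rw [hd0', hself]
        push_cast
        omega
      · obtain ⟨i', rfl⟩ : ∃ i', i = i' + 1 := ⟨i - 1, by omega⟩
        simp only [show i' + 1 + 1 = i' + 2 from rfl, show i' + 1 + 2 = i' + 3 from rfl] at *
        have hB' := (core (i' + 2) (by omega) (by omega)).2 (by omega)
        simp only [show i' + 2 - 1 = i' + 1 from rfl, show i' + 2 - 2 = i' from rfl] at hB'
        obtain ⟨μ, hu1, hu2, hu3⟩ := exists_median hT (P i') (P (i' + 1)) (P (i' + 2))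
        have hvu : 2 * (T.dist (P (i' + 1)) μ : ℤ) = e i' :=
          med2 i' (by omega) μ hu1 hu2 hu3
        have hlt : T.dist (P (i' + 1)) μ + T.dist (P (i' + 2)) m <
            T.dist (P (i' + 1)) (P (i' + 2)) := n3l i' (by omega) μ m hu1 hu3 h21 h23
        have hdd := d1 (i' + 1)
        simp only [show i' + 1 + 1 = i' + 2 from rfl] at hdd
        rw [hdd] at hlt
        omega
    simp only [show i + 2 - 2 = i from rfl, show i + 2 - 1 = i + 1 from rfl]
    rw [hw i, hw (i + 1), hw (i + 2), ← hP0]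
    rw [Set.eq_empty_iff_forall_notMem]
    rintro x ⟨hx1, hx2⟩
    have hdA : T.dist (P 0) x = T.dist (P 0) m + T.dist m x :=
      dist_to_seg hT hm1 hm2 hm3 hx2
    have hdE : T.dist (P i) x = T.dist (P i) m + T.dist m x :=
      dist_to_seg hT h21 h22 h23 hx2
    have k1 := mem_seg.mp hx1
    have k2 := mem_seg.mp hm1
    have k3 := mem_seg.mp h21
    have c1 : T.dist x (P i) = T.dist (P i) x := SimpleGraph.dist_comm ..
    have c2 : T.dist m (P (i + 1)) = T.dist (P (i + 1)) m := SimpleGraph.dist_comm ..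
    have hdi := d1 i
    rw [hdi] at k3
    omega
  · -- Part 2
    intro h2n
    obtain ⟨i, rfl⟩ : ∃ i, n = i + 2 := ⟨n - 2, by omega⟩
    obtain ⟨m, hm1, hm2, hm3⟩ := exists_median hT (P 0) (P (i + 1)) (P (i + 2))
    obtain ⟨m₂, h21, h22, h23⟩ := exists_median hT (P i) (P (i + 1)) (P (i + 2))
    have hBcore := (core (i + 2) (by omega) le_rfl).2 (by omega)
    simp only [show i + 2 - 1 = i + 1 from rfl, show i + 2 - 2 = i from rfl] at hBcore
    have hd := d1 (i + 1)
    simp only [show i + 1 + 1 = i + 2 from rfl] at hd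
    have hvm : 2 * (T.dist (P (i + 1)) m : ℤ) = e i := by
      have q := median_dist (seg_comm.mp hm1) hm3 hm2
      have c1 : T.dist (P (i + 1)) (P 0) = T.dist (P 0) (P (i + 1)) :=
        SimpleGraph.dist_comm ..
      rw [c1, hd] at q
      omega
    have hvm2 : 2 * (T.dist (P (i + 1)) m₂ : ℤ) = e i := med2 i (by omega) m₂ h21 h22 h23
    have hmeq : m = m₂ := by
      have hbet : m ∈ seg T (P (i + 1)) m₂ := seg_between hT hm3 h23 (by omega)
      have h0 : T.dist m m₂ = 0 := by have := mem_seg.mp hbet; omega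
      exact (hT.isConnected.dist_eq_zero_iff).mp h0
    subst hmeq
    constructor
    · simp only [show i + 2 - 2 = i from rfl, show i + 2 - 1 = i + 1 from rfl]
      rw [hw i, hw (i + 1), hw (i + 2), ← hP0]
      rw [seg_inter_eq hT hm1 hm2 hm3, seg_inter_eq hT h21 h22 h23]
    · simp only [show i + 2 - 2 = i from rfl, show i + 2 - 1 = i + 1 from rfl]
      rw [d0 (i + 1), d0 (i + 2)] at hBcore
      simp only [hedef] at hBcore
      unfold dlt
      rw [inv_inv, inv_inv, nrm_inv hT, nrm_inv hT, ← wordProd_succ]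
      simp only [show i + 1 + 1 = i + 2 from rfl]
      have hq : ((nrm T v0 (wordProd T a (i + 1)) : ℚ) + (nrm T v0 (a (i + 1)) : ℚ)
            - (nrm T v0 (wordProd T a (i + 2)) : ℚ))
          = ((nrm T v0 (a i) : ℚ) + (nrm T v0 (a (i + 1)) : ℚ)
            - (nrm T v0 (a i * a (i + 1)) : ℚ)) := by
        exact_mod_cast hBcore
      rw [hq]
  · -- Part 3
    have hco := (core n hn le_rfl).1
    rw [d0 n] at hco
    have hs : (∑ i ∈ Finset.range (n - 1), dlt T v0 (a i)⁻¹ (a (i + 1)))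
        = (∑ i ∈ Finset.range (n - 1), (e i : ℚ)) / 2 := by
      have h1 : (∑ i ∈ Finset.range (n - 1), dlt T v0 (a i)⁻¹ (a (i + 1)))
          = ∑ i ∈ Finset.range (n - 1), (e i : ℚ) / 2 :=
        Finset.sum_congr rfl fun i _ => hdlt i
      rw [h1, ← Finset.sum_div]
    have hcoQ : (nrm T v0 (wordProd T a n) : ℚ) =
        (∑ i ∈ Finset.range n, (nrm T v0 (a i) : ℚ))
          - ∑ i ∈ Finset.range (n - 1), (e i : ℚ) := by
      exact_mod_cast hco
    rw [hcoQ, hs]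
    ring

end TreePaper

end
end

section
/- Suppose a finite set X ⊆ Aut(T) satisfies N2. If there exist x, y, z ∈ X^± such that y ∉ {x⁻¹, z⁻¹} and |xyz| ≤ |x| + |z| − |y|, then δ(x⁻¹, y) = δ(y⁻¹, z) = |y|/2. -/
noncomputable section

open Pointwise

namespace TreePaper

variable {V : Type*}

section AuxTree

variable {V : Type*} {T : SimpleGraph V} [DecidableEq V]

private lemma aux_path_length (hT : T.IsTree) {u v : V} {p : T.Walk u v} (hp : p.IsPath) :
    p.length = T.dist u v := by
  obtain ⟨q, hq, hq'⟩ := hT.isConnected.exists_path_of_dist u v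
  have h : (⟨p, hp⟩ : T.Path u v) = ⟨q, hq⟩ :=
    (SimpleGraph.isAcyclic_iff_path_unique.mp hT.IsAcyclic) _ _
  rw [show p = q from congrArg Subtype.val h, hq']

private lemma aux_on_shortest (hT : T.IsTree) {u v m : V} (p : T.Walk u v)
    (hlen : p.length = T.dist u v) (hm : m ∈ p.support) :
    (p.takeUntil m hm).length = T.dist u m ∧ (p.dropUntil m hm).length = T.dist m v := by
  have h1 : (p.takeUntil m hm).length + (p.dropUntil m hm).length = p.length := by
    rw [← SimpleGraph.Walk.length_append, SimpleGraph.Walk.take_spec]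
  have h2 := SimpleGraph.dist_le (p.takeUntil m hm)
  have h3 := SimpleGraph.dist_le (p.dropUntil m hm)
  have h4 := hT.isConnected.dist_triangle (u := u) (v := m) (w := v)
  omega

private lemma aux_glue (hT : T.IsTree) {a m w : V} (q1 : T.Walk a m) (hq1 : q1.IsPath)
    (r : T.Walk m w) (hr : r.IsPath) (hrlen : r.length = T.dist m w)
    (hmin : ∀ v ∈ q1.support, T.dist m w ≤ T.dist v w) :
    T.dist a w = q1.length + T.dist m w := by
  have hpath : (q1.append r).IsPath := by
    rw [SimpleGraph.Walk.isPath_def, SimpleGraph.Walk.support_append]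
    refine List.Nodup.append ((SimpleGraph.Walk.isPath_def _).mp hq1)
      (((SimpleGraph.Walk.isPath_def _).mp hr).sublist (List.tail_sublist _)) ?_
    intro v hv hv'
    have hvr : v ∈ r.support := List.mem_of_mem_tail hv'
    have hvm : v ≠ m := by
      intro h; subst h
      have hnd := (SimpleGraph.Walk.isPath_def _).mp hr
      rw [r.support_eq_cons] at hnd
      exact (List.nodup_cons.mp hnd).1 hv'
    have hsum : T.dist m v + T.dist v w = T.dist m w := by
      have h5 := congrArg SimpleGraph.Walk.length (r.take_spec hvr)
      rw [SimpleGraph.Walk.length_append] at h5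
      have h6 := SimpleGraph.dist_le (r.takeUntil v hvr)
      have h7 := SimpleGraph.dist_le (r.dropUntil v hvr)
      have h8 := hT.isConnected.dist_triangle (u := m) (v := v) (w := w)
      omega
    have hpos : 0 < T.dist m v := hT.isConnected.pos_dist_of_ne (Ne.symm hvm)
    have h9 := hmin v hv
    omega
  have h10 := aux_path_length hT hpath
  rw [SimpleGraph.Walk.length_append, hrlen] at h10
  omega

private lemma aux_median (hT : T.IsTree) (a b w : V) :
    ∃ m : V, T.dist a m + T.dist m b = T.dist a b ∧
      T.dist w m + T.dist m a = T.dist w a ∧ T.dist w m + T.dist m b = T.dist w b := by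
  obtain ⟨p, hp, hplen⟩ := hT.isConnected.exists_path_of_dist a b
  obtain ⟨m, hmarg⟩ : ∃ m, m ∈ List.argmin (fun v => T.dist v w) p.support := by
    cases h : List.argmin (fun v => T.dist v w) p.support with
    | none => exact absurd (List.argmin_eq_none.mp h) p.support_ne_nil
    | some m => exact ⟨m, by simp [h]⟩
  have hm : m ∈ p.support := List.argmin_mem hmarg
  have hmin : ∀ v ∈ p.support, T.dist m w ≤ T.dist v w := fun v hv =>
    not_lt.mp (List.not_lt_of_mem_argmin hv hmarg)
  obtain ⟨hlen1, hlen2⟩ := aux_on_shortest hT p hplen hm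
  obtain ⟨r, hr, hrlen⟩ := hT.isConnected.exists_path_of_dist m w
  have hsum : T.dist a m + T.dist m b = T.dist a b := by
    have h5 := congrArg SimpleGraph.Walk.length (p.take_spec hm)
    rw [SimpleGraph.Walk.length_append] at h5
    omega
  have h1 : T.dist a w = T.dist a m + T.dist m w := by
    have h := aux_glue hT (p.takeUntil m hm) (hp.takeUntil hm) r hr hrlen
      (fun v hv => hmin v (p.support_takeUntil_subset hm hv))
    rwa [hlen1] at h
  have h2 : T.dist b w = T.dist m b + T.dist m w := by
    have h := aux_glue hT (p.dropUntil m hm).reverse ((hp.dropUntil hm).reverse) r hr hrlen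
      (fun v hv => hmin v (p.support_dropUntil_subset hm
        (by rwa [SimpleGraph.Walk.support_reverse, List.mem_reverse] at hv)))
    rwa [SimpleGraph.Walk.length_reverse, hlen2] at h
  have c1 : T.dist w m = T.dist m w := SimpleGraph.dist_comm
  have c2 : T.dist m a = T.dist a m := SimpleGraph.dist_comm
  have c3 : T.dist w a = T.dist a w := SimpleGraph.dist_comm
  have c4 : T.dist w b = T.dist b w := SimpleGraph.dist_comm
  exact ⟨m, hsum, by omega, by omega⟩

private lemma aux_collinear (hT : T.IsTree) {w b p q : V}
    (hp : T.dist w p + T.dist p b = T.dist w b) (hq : T.dist w q + T.dist q b = T.dist w b)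
    (hle : T.dist w p ≤ T.dist w q) : T.dist w p + T.dist p q = T.dist w q := by
  obtain ⟨s1, hs1, hs1l⟩ := hT.isConnected.exists_path_of_dist w p
  obtain ⟨s2, hs2, hs2l⟩ := hT.isConnected.exists_path_of_dist p b
  obtain ⟨t1, ht1, ht1l⟩ := hT.isConnected.exists_path_of_dist w q
  obtain ⟨t2, ht2, ht2l⟩ := hT.isConnected.exists_path_of_dist q b
  have hc : (s1.append s2).IsPath := (s1.append s2).isPath_of_length_eq_dist
    (by rw [SimpleGraph.Walk.length_append]; omega)
  have hc' : (t1.append t2).IsPath := (t1.append t2).isPath_of_length_eq_dist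
    (by rw [SimpleGraph.Walk.length_append]; omega)
  have heq : s1.append s2 = t1.append t2 := by
    have h := (SimpleGraph.isAcyclic_iff_path_unique.mp hT.IsAcyclic)
      (⟨s1.append s2, hc⟩ : T.Path w b) ⟨t1.append t2, hc'⟩
    exact congrArg Subtype.val h
  have hqmem : q ∈ (s1.append s2).support := by
    rw [heq]
    exact SimpleGraph.Walk.subset_support_append_left _ _ t1.end_mem_support
  rw [SimpleGraph.Walk.mem_support_append_iff] at hqmem
  rcases hqmem with h | h
  · have hsum : T.dist w q + T.dist q p = T.dist w p := by
      have h5 := congrArg SimpleGraph.Walk.length (s1.take_spec h)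
      rw [SimpleGraph.Walk.length_append] at h5
      have h6 := SimpleGraph.dist_le (s1.takeUntil q h)
      have h7 := SimpleGraph.dist_le (s1.dropUntil q h)
      have h8 := hT.isConnected.dist_triangle (u := w) (v := q) (w := p)
      omega
    have h0 : T.dist q p = 0 := by omega
    have hqp : q = p := (hT.isConnected.dist_eq_zero_iff).mp h0
    subst hqp
    simp [SimpleGraph.dist_self]
  · have hsum : T.dist p q + T.dist q b = T.dist p b := by
      have h5 := congrArg SimpleGraph.Walk.length (s2.take_spec h)
      rw [SimpleGraph.Walk.length_append] at h5
      have h6 := SimpleGraph.dist_le (s2.takeUntil q h)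
      have h7 := SimpleGraph.dist_le (s2.dropUntil q h)
      have h8 := hT.isConnected.dist_triangle (u := p) (v := q) (w := b)
      omega
    omega

private lemma aux_gromov (hT : T.IsTree) (w a b c : V) :
    min ((T.dist w a : ℤ) + T.dist w b - T.dist a b)
        ((T.dist w b : ℤ) + T.dist w c - T.dist b c)
      ≤ (T.dist w a : ℤ) + T.dist w c - T.dist a c := by
  obtain ⟨m1, h1ab, h1wa, h1wb⟩ := aux_median hT a b w
  obtain ⟨m2, h2bc, h2wb, h2wc⟩ := aux_median hT b c w
  have htri : T.dist a c ≤ T.dist a m1 + T.dist m1 c := hT.isConnected.dist_triangle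
  have htri2 : T.dist m1 c ≤ T.dist m1 m2 + T.dist m2 c := hT.isConnected.dist_triangle
  have e1 : T.dist m1 a = T.dist a m1 := SimpleGraph.dist_comm
  have e2 : T.dist m2 b = T.dist b m2 := SimpleGraph.dist_comm
  have e3 : T.dist m2 m1 = T.dist m1 m2 := SimpleGraph.dist_comm
  rcases le_total (T.dist w m1) (T.dist w m2) with h | h
  · have hcol := aux_collinear hT h1wb h2wb h
    exact le_trans (min_le_left _ _) (by omega)
  · have hcol := aux_collinear hT h2wb h1wb h
    exact le_trans (min_le_right _ _) (by omega)

private lemma aux_iso_dist_le (hT : T.IsTree) (e : T ≃g T) (u v : V) :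
    T.dist (e u) (e v) ≤ T.dist u v := by
  obtain ⟨p, hp, hl⟩ := hT.isConnected.exists_path_of_dist u v
  have h := SimpleGraph.dist_le (p.map e.toHom)
  rwa [SimpleGraph.Walk.length_map, hl] at h

private lemma aux_iso_dist (hT : T.IsTree) (e : T ≃g T) (u v : V) :
    T.dist (e u) (e v) = T.dist u v := by
  refine le_antisymm (aux_iso_dist_le hT e u v) ?_
  have h := aux_iso_dist_le hT e.symm (e u) (e v)
  simpa using h

end AuxTree

/-- under N2, a violation of N3 forces δ(x⁻¹,y) = δ(y⁻¹,z) = |y|/2. -/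
theorem statement_8 {V : Type*} (T : SimpleGraph V) (hT : T.IsTree) (v0 : V)
    (X : Set (T ≃g T)) (hXfin : X.Finite) (hN2 : N2 T v0 X)
    (x y z : T ≃g T) (hx : x ∈ Xpm T X) (hy : y ∈ Xpm T X) (hz : z ∈ Xpm T X)
    (hyx : y ≠ x⁻¹) (hyz : y ≠ z⁻¹)
    (hlen : (nrm T v0 (x * y * z) : ℚ)
      ≤ (nrm T v0 x : ℚ) + (nrm T v0 z : ℚ) - (nrm T v0 y : ℚ)) :
    dlt T v0 x⁻¹ y = (nrm T v0 y : ℚ) / 2 ∧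
    dlt T v0 y⁻¹ z = (nrm T v0 y : ℚ) / 2 := by
  classical
  have hinv : ∀ g : T ≃g T, nrm T v0 g⁻¹ = nrm T v0 g := by
    intro g
    have h := aux_iso_dist hT g v0 (g⁻¹ v0)
    have hg : g (g⁻¹ v0) = v0 := g.apply_symm_apply v0
    rw [hg] at h
    unfold nrm
    rw [← h, SimpleGraph.dist_comm]
  have hxy' : x ≠ y⁻¹ := by
    intro h; apply hyx; rw [h, inv_inv]
  have hmax1 := hN2 x hx y hy hxy'
  have hmax2 := hN2 y hy z hz hyz
  have hm1 : nrm T v0 x ≤ nrm T v0 (x * y) := le_trans (le_max_left _ _) hmax1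
  have hm2 : nrm T v0 z ≤ nrm T v0 (y * z) := le_trans (le_max_right _ _) hmax2
  set p1 := x v0 with hp1
  set p2 := x (y v0) with hp2
  set p3 := x (y (z v0)) with hp3
  have h01 : T.dist p1 v0 = nrm T v0 x := SimpleGraph.dist_comm
  have h12 : T.dist p1 p2 = nrm T v0 y := aux_iso_dist hT x v0 (y v0)
  have h23 : T.dist p3 p2 = nrm T v0 z := by
    have h := aux_iso_dist hT (x * y) v0 (z v0)
    have h' : T.dist p2 p3 = nrm T v0 z := h
    rw [← h', SimpleGraph.dist_comm]
  have h02 : T.dist v0 p2 = nrm T v0 (x * y) := rfl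
  have h13 : T.dist p1 p3 = nrm T v0 (y * z) := aux_iso_dist hT x v0 ((y * z) v0)
  have h03 : T.dist v0 p3 = nrm T v0 (x * y * z) := rfl
  have hlenZ : (nrm T v0 (x * y * z) : ℤ)
      ≤ (nrm T v0 x : ℤ) + (nrm T v0 z : ℤ) - (nrm T v0 y : ℤ) := by exact_mod_cast hlen
  have G2 := aux_gromov hT p1 v0 p3 p2
  have key : nrm T v0 (x * y) + nrm T v0 (y * z) ≤ nrm T v0 x + nrm T v0 z := by
    have c03 : T.dist p1 v0 + T.dist v0 p3 ≥ T.dist p1 p3 :=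
      hT.isConnected.dist_triangle
    rcases min_le_iff.mp G2 with h | h <;> omega
  have hb12 : nrm T v0 (x * y) = nrm T v0 x := by omega
  have hb23 : nrm T v0 (y * z) = nrm T v0 z := by omega
  constructor
  · show ((nrm T v0 x⁻¹ : ℚ) + (nrm T v0 y : ℚ) - (nrm T v0 (x⁻¹⁻¹ * y) : ℚ)) / 2 = _
    rw [inv_inv, hinv, hb12]
    ring
  · show ((nrm T v0 y⁻¹ : ℚ) + (nrm T v0 z : ℚ) - (nrm T v0 (y⁻¹⁻¹ * z) : ℚ)) / 2 = _
    rw [inv_inv, hinv, hb23]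
    ring


end TreePaper

end
end
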